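/- Fix a real R and suppose the pair (T̆,V̆) attains the minimum defining E_c^{ML}(R,Q), and define Q'(x) = ∑_y T̆(y)V̆(x|y). Then E_c^{ML}(R,Q') ≤ E_c^{ML}(R,Q). More precisely, there exists ρ̂ ∈ [−1,0] such that E_c^{ML}(R,Q') = E₀(ρ̂,Q') − ρ̂·R and E_c^{ML}(R,Q) − E_c^{ML}(R,Q') ≥ (1+ρ̂)·D(Q'‖Q), where D(Q'‖Q) = ∑_x Q'(x) log(Q'(x)/Q(x)). -/

import Mathlib

open scoped BigOperators
open Filter Topology

/-- `f` is a probability mass function on a finite alphabet. -/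
def IsPMF {α : Type*} [Fintype α] (f : α → ℝ) : Prop :=
  (∀ a, 0 ≤ f a) ∧ ∑ a, f a = 1

/-- `P` is a discrete memoryless channel from `𝓧` to `𝓨`. -/
def IsChannel {𝓧 𝓨 : Type*} [Fintype 𝓧] [Fintype 𝓨] (P : 𝓧 → 𝓨 → ℝ) : Prop :=
  ∀ x, IsPMF (P x)

/-- `V` is a conditional pmf on `𝓧` given `𝓨`. -/
def IsCondPMF {𝓧 𝓨 : Type*} [Fintype 𝓧] [Fintype 𝓨] (V : 𝓨 → 𝓧 → ℝ) : Prop :=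
  ∀ y, IsPMF (V y)

/-- one term `s·log(s/t)` of a KL divergence, with the conventions
    `0·log(0/t) = 0` and `s·log(s/0) = +∞` for `s > 0`. -/
noncomputable def klTerm (s t : ℝ) : EReal :=
  if s = 0 then 0 else if t = 0 then ⊤ else ((s * Real.log (s / t) : ℝ) : EReal)

/-- `D(T∘V ‖ Q∘P)`. -/
noncomputable def DQP {𝓧 𝓨 : Type*} [Fintype 𝓧] [Fintype 𝓨]
    (T : 𝓨 → ℝ) (V : 𝓨 → 𝓧 → ℝ) (Q : 𝓧 → ℝ) (P : 𝓧 → 𝓨 → ℝ) : EReal :=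
  ∑ y, ∑ x, klTerm (T y * V y x) (Q x * P x y)

/-- `D(T∘V ‖ T×Q)`. -/
noncomputable def DTQ {𝓧 𝓨 : Type*} [Fintype 𝓧] [Fintype 𝓨]
    (T : 𝓨 → ℝ) (V : 𝓨 → 𝓧 → ℝ) (Q : 𝓧 → ℝ) : EReal :=
  ∑ y, ∑ x, klTerm (T y * V y x) (T y * Q x)

/-- Gallager's function `E₀(ρ,Q)` (for `ρ > −1`). -/
noncomputable def E0 {𝓧 𝓨 : Type*} [Fintype 𝓧] [Fintype 𝓨]
    (ρ : ℝ) (Q : 𝓧 → ℝ) (P : 𝓧 → 𝓨 → ℝ) : ℝ :=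
  - Real.log (∑ y, (∑ x, Q x * P x y ^ (1 / (1 + ρ))) ^ (1 + ρ))

/-- The joint distribution `T_ρ∘V_ρ` on `𝓧 × 𝓨` (for `ρ > −1`). -/
noncomputable def Jrho {𝓧 𝓨 : Type*} [Fintype 𝓧] [Fintype 𝓨]
    (ρ : ℝ) (Q : 𝓧 → ℝ) (P : 𝓧 → 𝓨 → ℝ) (x : 𝓧) (y : 𝓨) : ℝ :=
  Q x * P x y ^ (1 / (1 + ρ)) * (∑ a, Q a * P a y ^ (1 / (1 + ρ))) ^ ρ /
    ∑ y', (∑ a, Q a * P a y' ^ (1 / (1 + ρ))) ^ (1 + ρ)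

/-- `max_{x : Q(x) > 0} P(y|x)`. -/
noncomputable def maxP {𝓧 𝓨 : Type*} (Q : 𝓧 → ℝ) (P : 𝓧 → 𝓨 → ℝ) (y : 𝓨) : ℝ :=
  ⨆ x : {x // 0 < Q x}, P x.1 y

/-- `E₀(−1,Q) = −log ∑_y max_{x : Q(x)>0} P(y|x)`. -/
noncomputable def E0m1 {𝓧 𝓨 : Type*} [Fintype 𝓧] [Fintype 𝓨]
    (Q : 𝓧 → ℝ) (P : 𝓧 → 𝓨 → ℝ) : ℝ :=
  - Real.log (∑ y, maxP Q P y)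

/-- `E₀(ρ,Q)` extended to `ρ = −1`. -/
noncomputable def E0full {𝓧 𝓨 : Type*} [Fintype 𝓧] [Fintype 𝓨]
    (ρ : ℝ) (Q : 𝓧 → ℝ) (P : 𝓧 → 𝓨 → ℝ) : ℝ :=
  if ρ = -1 then E0m1 Q P else E0 ρ Q P

/-- `T_{−1}(y) ∝ max_{a : Q(a)>0} P(y|a)`. -/
noncomputable def Tm1 {𝓧 𝓨 : Type*} [Fintype 𝓧] [Fintype 𝓨]
    (Q : 𝓧 → ℝ) (P : 𝓧 → 𝓨 → ℝ) (y : 𝓨) : ℝ :=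
  maxP Q P y / ∑ y', maxP Q P y'

/-- `V` is admissible at `ρ = −1`: `V(x|y) = 0` for every `x` outside
    `argmax_{a : Q(a)>0} P(y|a)`. -/
def AdmissibleAtM1 {𝓧 𝓨 : Type*} [Fintype 𝓧] [Fintype 𝓨]
    (Q : 𝓧 → ℝ) (P : 𝓧 → 𝓨 → ℝ) (V : 𝓨 → 𝓧 → ℝ) : Prop :=
  ∀ y x, ¬ (0 < Q x ∧ ∀ a, 0 < Q a → P a y ≤ P x y) → V y x = 0

/-- the error exponent `E_e(R,Q)`. -/
noncomputable def Ee {𝓧 𝓨 : Type*} [Fintype 𝓧] [Fintype 𝓨]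
    (R : ℝ) (Q : 𝓧 → ℝ) (P : 𝓧 → 𝓨 → ℝ) : EReal :=
  sInf {v | ∃ T : 𝓨 → ℝ, ∃ V : 𝓨 → 𝓧 → ℝ, IsPMF T ∧ IsCondPMF V ∧
    v = DQP T V Q P + max (DTQ T V Q - (R : EReal)) 0}

/-- the ML correct-decoding exponent `E_c^{ML}(R,Q)`. -/
noncomputable def EcML {𝓧 𝓨 : Type*} [Fintype 𝓧] [Fintype 𝓨]
    (R : ℝ) (Q : 𝓧 → ℝ) (P : 𝓧 → 𝓨 → ℝ) : EReal :=
  sInf {v | ∃ T : 𝓨 → ℝ, ∃ V : 𝓨 → 𝓧 → ℝ, IsPMF T ∧ IsCondPMF V ∧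
    v = DQP T V Q P + max ((R : EReal) - DTQ T V Q) 0}

/-- the strict correct-decoding exponent `E_c(R,Q)` (`+∞` if infeasible). -/
noncomputable def Ec {𝓧 𝓨 : Type*} [Fintype 𝓧] [Fintype 𝓨]
    (R : ℝ) (Q : 𝓧 → ℝ) (P : 𝓧 → 𝓨 → ℝ) : EReal :=
  sInf {v | ∃ T : 𝓨 → ℝ, ∃ V : 𝓨 → 𝓧 → ℝ, IsPMF T ∧ IsCondPMF V ∧
    (R : EReal) ≤ DTQ T V Q ∧ v = DQP T V Q P}

/-- the mutual information `I(Q∘P)`. -/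
noncomputable def MI {𝓧 𝓨 : Type*} [Fintype 𝓧] [Fintype 𝓨]
    (Q : 𝓧 → ℝ) (P : 𝓧 → 𝓨 → ℝ) : ℝ :=
  ∑ x, ∑ y, if Q x * P x y = 0 then 0
    else Q x * P x y * Real.log (P x y / ∑ a, Q a * P a y)

/-- the capacity `C(Z)` of the channel restricted to input letters in `Z`. -/
noncomputable def capacity {𝓧 𝓨 : Type*} [Fintype 𝓧] [Fintype 𝓨]
    (P : 𝓧 → 𝓨 → ℝ) (Z : Set 𝓧) : ℝ :=
  sSup {c | ∃ Q' : 𝓧 → ℝ, IsPMF Q' ∧ (∀ x, 0 < Q' x → x ∈ Z) ∧ c = MI Q' P}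

/-- `R_{−1}^{−}(Q)`. -/
noncomputable def Rm1minus {𝓧 𝓨 : Type*} [Fintype 𝓧] [Fintype 𝓨]
    (Q : 𝓧 → ℝ) (P : 𝓧 → 𝓨 → ℝ) : EReal :=
  sInf {v | ∃ V : 𝓨 → 𝓧 → ℝ, IsCondPMF V ∧ AdmissibleAtM1 Q P V ∧
    v = DTQ (Tm1 Q P) V Q}

/-- `R_{−1}^{+}(Q)`. -/
noncomputable def Rm1plus {𝓧 𝓨 : Type*} [Fintype 𝓧] [Fintype 𝓨]
    (Q : 𝓧 → ℝ) (P : 𝓧 → 𝓨 → ℝ) : EReal :=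
  sSup {v | ∃ V : 𝓨 → 𝓧 → ℝ, IsCondPMF V ∧ AdmissibleAtM1 Q P V ∧
    v = DTQ (Tm1 Q P) V Q}

/-- `F_ρ(T∘V, Q) = D(T∘V‖Q∘P) + ρ·D(T∘V‖T×Q)`. -/
noncomputable def Frho {𝓧 𝓨 : Type*} [Fintype 𝓧] [Fintype 𝓨]
    (ρ : ℝ) (T : 𝓨 → ℝ) (V : 𝓨 → 𝓧 → ℝ) (Q : 𝓧 → ℝ) (P : 𝓧 → 𝓨 → ℝ) : EReal :=
  DQP T V Q P + (ρ : EReal) * DTQ T V Q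

/-- the unconstrained penalized minimum
    `min_{T,V} { D(T∘V‖Q∘P) + ρ·(D(T∘V‖T×Q) − R) }`. -/
noncomputable def penMin {𝓧 𝓨 : Type*} [Fintype 𝓧] [Fintype 𝓨]
    (Q : 𝓧 → ℝ) (P : 𝓧 → 𝓨 → ℝ) (R ρ : ℝ) : EReal :=
  sInf {v | ∃ T : 𝓨 → ℝ, ∃ V : 𝓨 → 𝓧 → ℝ, IsPMF T ∧ IsCondPMF V ∧
    v = DQP T V Q P + (ρ : EReal) * (DTQ T V Q - (R : EReal))}

/-- the support-constrained penalized minimum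
    `min_{T,V : supp(V) ⊆ supp(Q)} { D(T∘V‖Q∘P) − ρ·(R − D(T∘V‖T×Q)) }`. -/
noncomputable def penMinS {𝓧 𝓨 : Type*} [Fintype 𝓧] [Fintype 𝓨]
    (Q : 𝓧 → ℝ) (P : 𝓧 → 𝓨 → ℝ) (R ρ : ℝ) : EReal :=
  sInf {v | ∃ T : 𝓨 → ℝ, ∃ V : 𝓨 → 𝓧 → ℝ, IsPMF T ∧ IsCondPMF V ∧
    (∀ y x, Q x = 0 → V y x = 0) ∧
    v = DQP T V Q P - (ρ : EReal) * ((R : EReal) - DTQ T V Q)}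


/-!
For `ρ ∈ [-1, 0]` and every pair `(T, V)` with `D(T∘V‖Q∘P) < ∞`, two applications of Gibbs'
inequality (over `x` given `y`, then over `y`) give Gallager's bound
`E₀(ρ,Q) ≤ D(T∘V‖Q∘P) + ρ·D(T∘V‖T×Q)`; since `|a|⁺ ≥ -ρ·a`, this yields
`E_c^{ML}(R,Q) ≥ E₀(ρ,Q) - ρR`. The tilted pair `(T_ρ, V_ρ)` attains Gallager's bound, and its
rate `r(ρ) = D(T_ρ∘V_ρ‖T_ρ×Q)` is continuous on `(-1, 0]`. By the intermediate value theorem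
either `r(ρ) = R` for some `ρ`, or `R ≤ r(0)` and `ρ = 0` is optimal, or `r < R` throughout and
letting `ρ → -1` shows that `ρ = -1` is optimal; so the bound is attained at some `ρ̂`.

For the minimizing pair `(T, V)` with input marginal `Q'`, the chain rule splits both divergences
relative to `Q` into those relative to `Q'` plus `D(Q'‖Q)`, and Gallager's bound for `Q'` at `ρ̂`
gives `E_c^{ML}(R,Q) ≥ E₀(ρ̂,Q') - ρ̂R + (1+ρ̂)·D(Q'‖Q)`.
-/

open Real Set Finset

section Basic

variable {α : Type*} [Fintype α]

lemma pos_and_pos_of_mul_ne_zero {a b : ℝ} (ha : 0 ≤ a) (hb : 0 ≤ b) (h : a * b ≠ 0) :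
    0 < a ∧ 0 < b :=
  ⟨ha.lt_of_ne (left_ne_zero_of_mul h).symm, hb.lt_of_ne (right_ne_zero_of_mul h).symm⟩

lemma IsPMF.exists_pos {p : α → ℝ} (hp : IsPMF p) : ∃ a, 0 < p a := by
  by_contra! h
  have : ∑ a, p a = 0 := sum_eq_zero fun a _ => le_antisymm (h a) (hp.1 a)
  simp [hp.2] at this

theorem neg_log_sum_le_sum_mul_log_div {p μ : α → ℝ} (hp : IsPMF p) (hμ : ∀ a, 0 ≤ μ a)
    (hpμ : ∀ a, p a ≠ 0 → 0 < μ a) : -log (∑ a, μ a) ≤ ∑ a, p a * log (p a / μ a) := by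
  classical
  set t := univ.filter fun a => p a ≠ 0
  have hpos : ∀ a ∈ t, 0 < p a := fun a ha => (hp.1 a).lt_of_ne (mem_filter.1 ha).2.symm
  have ht : ∑ a ∈ t, p a = 1 := by
    rw [sum_filter_ne_zero, hp.2]
  have jensen := strictConcaveOn_log_Ioi.concaveOn.le_map_sum (t := t) (w := p)
    (p := fun a => μ a / p a) (fun a ha => (hpos a ha).le) ht
    fun a ha => div_pos (hpμ a (hpos a ha).ne') (hpos a ha)
  have hcancel : ∑ a ∈ t, p a • (μ a / p a) = ∑ a ∈ t, μ a :=
    sum_congr rfl fun a ha => by rw [smul_eq_mul, mul_div_cancel₀ _ (hpos a ha).ne']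
  have hsub : ∑ a ∈ t, μ a ≤ ∑ a, μ a := sum_le_univ_sum_of_nonneg hμ
  have hlog : log (∑ a ∈ t, μ a) ≤ log (∑ a, μ a) := by
    obtain ⟨a, ha⟩ := hp.exists_pos
    have : 0 < ∑ a ∈ t, μ a := sum_pos' (fun b hb => (hpμ b (hpos b hb).ne').le)
      ⟨a, mem_filter.2 ⟨mem_univ a, ha.ne'⟩, hpμ a ha.ne'⟩
    exact log_le_log this hsub
  have hsupp : ∑ a, p a * log (p a / μ a) = -∑ a ∈ t, p a • log (μ a / p a) := by
    rw [← sum_filter_of_ne fun a _ h => left_ne_zero_of_mul h, ← sum_neg_distrib]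
    refine sum_congr rfl fun a _ => ?_
    rw [smul_eq_mul, ← inv_div, log_inv, mul_neg]
  rw [hcancel] at jensen
  rw [hsupp]
  linarith

end Basic

lemma EReal.coe_finset_sum {ι : Type*} (s : Finset ι) (f : ι → ℝ) :
    ((∑ i ∈ s, f i : ℝ) : EReal) = ∑ i ∈ s, (f i : EReal) :=
  map_sum (⟨⟨(↑), EReal.coe_zero⟩, EReal.coe_add⟩ : ℝ →+ EReal) f s

lemma EReal.finset_sum_ne_bot {ι : Type*} {s : Finset ι} {f : ι → EReal}
    (h : ∀ i ∈ s, f i ≠ ⊥) : ∑ i ∈ s, f i ≠ ⊥ := by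
  induction s using Finset.cons_induction with
  | empty => simp
  | cons a s ha ih =>
    rw [sum_cons]
    exact EReal.add_ne_bot_iff.2 ⟨h a (mem_cons_self a s), ih fun i hi => h i (mem_cons_of_mem hi)⟩

lemma EReal.finset_sum_eq_top {ι : Type*} [DecidableEq ι] {s : Finset ι} {f : ι → EReal}
    (h : ∀ i ∈ s, f i ≠ ⊥) {i : ι} (hi : i ∈ s) (hfi : f i = ⊤) : ∑ j ∈ s, f j = ⊤ := by
  rw [← add_sum_erase s f hi, hfi]
  exact EReal.top_add_of_ne_bot (EReal.finset_sum_ne_bot fun j hj => h j (mem_of_mem_erase hj))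

lemma EReal.max_zero_ne_bot (a : EReal) : max a 0 ≠ ⊥ :=
  ne_bot_of_le_ne_bot EReal.zero_ne_bot (le_max_right _ _)

lemma klTerm_ne_bot (s t : ℝ) : klTerm s t ≠ ⊥ := by
  unfold klTerm
  split_ifs
  · exact EReal.zero_ne_bot
  · exact top_ne_bot
  · exact EReal.coe_ne_bot _

lemma klTerm_eq_coe {s t : ℝ} (h : s ≠ 0 → t ≠ 0) :
    klTerm s t = ((s * log (s / t) : ℝ) : EReal) := by
  unfold klTerm
  split_ifs with hs ht
  · simp [hs]
  · exact absurd ht (h hs)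
  · rfl

lemma klTerm_eq_top {s t : ℝ} (hs : s ≠ 0) (ht : t = 0) : klTerm s t = ⊤ := by
  simp [klTerm, hs, ht]

section Sums

variable {α β : Type*} [Fintype α] [Fintype β]

lemma sum_klTerm_eq_coe {s t : α → ℝ} (h : ∀ a, s a ≠ 0 → t a ≠ 0) :
    ∑ a, klTerm (s a) (t a) = ((∑ a, s a * log (s a / t a) : ℝ) : EReal) := by
  rw [EReal.coe_finset_sum]
  exact sum_congr rfl fun a _ => klTerm_eq_coe (h a)

lemma sum_sum_klTerm_eq_coe {s t : β → α → ℝ} (h : ∀ b a, s b a ≠ 0 → t b a ≠ 0) :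
    ∑ b, ∑ a, klTerm (s b a) (t b a) = ((∑ b, ∑ a, s b a * log (s b a / t b a) : ℝ) : EReal) := by
  rw [EReal.coe_finset_sum]
  exact sum_congr rfl fun b _ => sum_klTerm_eq_coe (h b)

lemma sum_klTerm_eq_top [DecidableEq α] {s t : α → ℝ} {a : α} (hs : s a ≠ 0) (ht : t a = 0) :
    ∑ c, klTerm (s c) (t c) = ⊤ :=
  EReal.finset_sum_eq_top (fun _ _ => klTerm_ne_bot _ _) (mem_univ a) (klTerm_eq_top hs ht)

lemma sum_sum_klTerm_eq_top [DecidableEq α] [DecidableEq β] {s t : β → α → ℝ} {b : β} {a : α}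
    (hs : s b a ≠ 0) (ht : t b a = 0) : ∑ d, ∑ c, klTerm (s d c) (t d c) = ⊤ :=
  EReal.finset_sum_eq_top (fun _ _ => EReal.finset_sum_ne_bot fun _ _ => klTerm_ne_bot _ _)
    (mem_univ b) (sum_klTerm_eq_top hs ht)

theorem sum_klTerm_nonneg {p q : α → ℝ} (hp : IsPMF p) (hq : IsPMF q) :
    0 ≤ ∑ a, klTerm (p a) (q a) := by
  classical
  by_cases h : ∀ a, p a ≠ 0 → q a ≠ 0
  · rw [sum_klTerm_eq_coe h, ← EReal.coe_zero, EReal.coe_le_coe_iff]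
    have := neg_log_sum_le_sum_mul_log_div hp hq.1 fun a ha => (hq.1 a).lt_of_ne (h a ha).symm
    rwa [hq.2, log_one, neg_zero] at this
  · push Not at h
    obtain ⟨a, hpa, hqa⟩ := h
    rw [sum_klTerm_eq_top hpa hqa]
    exact le_top

end Sums

section Divergences

variable {𝓧 𝓨 : Type*} [Fintype 𝓨]
  {T : 𝓨 → ℝ} {V : 𝓨 → 𝓧 → ℝ} {Q Q' : 𝓧 → ℝ} {P : 𝓧 → 𝓨 → ℝ}

lemma ne_zero_of_marginal_ne_zero (hQ' : ∀ x, Q' x = ∑ y, T y * V y x)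
    (h : ∀ y x, T y * V y x ≠ 0 → Q x ≠ 0) {x : 𝓧} (hx : Q' x ≠ 0) : Q x ≠ 0 := by
  obtain ⟨y, -, hW⟩ := exists_ne_zero_of_sum_ne_zero (hQ' x ▸ hx)
  exact h y x hW

variable [Fintype 𝓧]

noncomputable def realDQP (T : 𝓨 → ℝ) (V : 𝓨 → 𝓧 → ℝ) (Q : 𝓧 → ℝ) (P : 𝓧 → 𝓨 → ℝ) : ℝ :=
  ∑ y, ∑ x, T y * V y x * log (T y * V y x / (Q x * P x y))

noncomputable def realDTQ (T : 𝓨 → ℝ) (V : 𝓨 → 𝓧 → ℝ) (Q : 𝓧 → ℝ) : ℝ :=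
  ∑ y, ∑ x, T y * V y x * log (T y * V y x / (T y * Q x))

lemma DQP_eq_coe (h : ∀ y x, T y * V y x ≠ 0 → Q x * P x y ≠ 0) :
    DQP T V Q P = realDQP T V Q P :=
  sum_sum_klTerm_eq_coe h

lemma DTQ_eq_coe (h : ∀ y x, T y * V y x ≠ 0 → Q x ≠ 0) : DTQ T V Q = realDTQ T V Q :=
  sum_sum_klTerm_eq_coe fun y x hW => mul_ne_zero (left_ne_zero_of_mul hW) (h y x hW)

lemma DQP_add_max_eq_coe (R : ℝ) (h : ∀ y x, T y * V y x ≠ 0 → Q x * P x y ≠ 0) :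
    DQP T V Q P + max ((R : EReal) - DTQ T V Q) 0
      = ((realDQP T V Q P + max (R - realDTQ T V Q) 0 : ℝ) : EReal) := by
  rw [DQP_eq_coe h, DTQ_eq_coe fun y x hW => left_ne_zero_of_mul (h y x hW), EReal.coe_add,
    EReal.coe_strictMono.monotone.map_max, EReal.coe_sub, EReal.coe_zero]

lemma DQP_add_max_eq_top (R : ℝ) {y : 𝓨} {x : 𝓧} (hW : T y * V y x ≠ 0) (hQP : Q x * P x y = 0) :
    DQP T V Q P + max ((R : EReal) - DTQ T V Q) 0 = ⊤ := by
  classical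
  have hDQP : DQP T V Q P = ⊤ :=
    sum_sum_klTerm_eq_top (s := fun y x => T y * V y x) (t := fun y x => Q x * P x y) hW hQP
  rw [hDQP]
  exact EReal.top_add_of_ne_bot (EReal.max_zero_ne_bot _)

lemma realDQP_eq_sum_log (h : ∀ y x, T y * V y x ≠ 0 → Q x * P x y ≠ 0) :
    realDQP T V Q P
      = ∑ y, ∑ x, T y * V y x * (log (T y) + log (V y x) - log (Q x) - log (P x y)) := by
  refine sum_congr rfl fun y _ => sum_congr rfl fun x _ => ?_
  by_cases hW : T y * V y x = 0
  · simp [hW]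
  · have hQP := h y x hW
    rw [log_div hW hQP, log_mul (left_ne_zero_of_mul hW) (right_ne_zero_of_mul hW),
      log_mul (left_ne_zero_of_mul hQP) (right_ne_zero_of_mul hQP)]
    ring

lemma realDTQ_eq_sum_log (h : ∀ y x, T y * V y x ≠ 0 → Q x ≠ 0) :
    realDTQ T V Q = ∑ y, ∑ x, T y * V y x * (log (V y x) - log (Q x)) := by
  refine sum_congr rfl fun y _ => sum_congr rfl fun x _ => ?_
  by_cases hW : T y * V y x = 0
  · simp [hW]
  · rw [mul_div_mul_left _ _ (left_ne_zero_of_mul hW),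
      log_div (right_ne_zero_of_mul hW) (h y x hW)]

lemma realDQP_add_mul_realDTQ (ρ : ℝ) (h : ∀ y x, T y * V y x ≠ 0 → Q x * P x y ≠ 0) :
    realDQP T V Q P + ρ * realDTQ T V Q
      = ∑ y, ∑ x, T y * V y x *
          (log (T y) + (1 + ρ) * (log (V y x) - log (Q x)) - log (P x y)) := by
  rw [realDQP_eq_sum_log h, realDTQ_eq_sum_log fun y x hW => left_ne_zero_of_mul (h y x hW)]
  simp only [mul_sum, ← sum_add_distrib]
  exact sum_congr rfl fun y _ => sum_congr rfl fun x _ => by ring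

theorem realDTQ_nonneg (hV : IsCondPMF V) (hQ : IsPMF Q) (hT : ∀ y, 0 ≤ T y)
    (h : ∀ y x, T y * V y x ≠ 0 → Q x ≠ 0) : 0 ≤ realDTQ T V Q := by
  refine sum_nonneg fun y _ => ?_
  by_cases hTy : T y = 0
  · simp [hTy]
  have hgibbs := neg_log_sum_le_sum_mul_log_div (hV y) hQ.1
    fun x hx => (hQ.1 x).lt_of_ne (h y x (mul_ne_zero hTy hx)).symm
  rw [hQ.2, log_one, neg_zero] at hgibbs
  calc 0 ≤ T y * ∑ x, V y x * log (V y x / Q x) := mul_nonneg (hT y) hgibbs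
    _ = _ := by
      rw [mul_sum]
      exact sum_congr rfl fun x _ => by rw [mul_div_mul_left _ _ hTy, mul_assoc]

lemma marginal_pos (hT : IsPMF T) (hV : IsCondPMF V) (hQ' : ∀ x, Q' x = ∑ y, T y * V y x)
    {y : 𝓨} {x : 𝓧} (hW : T y * V y x ≠ 0) : 0 < Q' x := by
  rw [hQ']
  exact (mul_nonneg (hT.1 y) ((hV y).1 x)).lt_of_ne hW.symm |>.trans_le <|
    single_le_sum (fun y' _ => mul_nonneg (hT.1 y') ((hV y').1 x)) (mem_univ y)

lemma isPMF_marginal (hT : IsPMF T) (hV : IsCondPMF V) (hQ' : ∀ x, Q' x = ∑ y, T y * V y x) :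
    IsPMF Q' := by
  refine ⟨fun x => hQ' x ▸ sum_nonneg fun y _ => mul_nonneg (hT.1 y) ((hV y).1 x), ?_⟩
  simp_rw [hQ']
  rw [sum_comm]
  simp_rw [← mul_sum, fun y => (hV y).2, mul_one]
  exact hT.2

lemma sum_sum_mul_log_marginal_sub_log (hQ' : ∀ x, Q' x = ∑ y, T y * V y x)
    (h : ∀ y x, T y * V y x ≠ 0 → Q x ≠ 0) :
    ∑ y, ∑ x, T y * V y x * (log (Q' x) - log (Q x)) = ∑ x, Q' x * log (Q' x / Q x) := by
  rw [sum_comm]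
  refine sum_congr rfl fun x _ => ?_
  rw [← sum_mul, ← hQ']
  by_cases hx : Q' x = 0
  · simp [hx]
  · rw [log_div hx (ne_zero_of_marginal_ne_zero hQ' h hx)]

theorem realDQP_eq_realDQP_marginal_add (hT : IsPMF T) (hV : IsCondPMF V)
    (hQ' : ∀ x, Q' x = ∑ y, T y * V y x) (h : ∀ y x, T y * V y x ≠ 0 → Q x * P x y ≠ 0) :
    realDQP T V Q P = realDQP T V Q' P + ∑ x, Q' x * log (Q' x / Q x) := by
  have h' : ∀ y x, T y * V y x ≠ 0 → Q' x * P x y ≠ 0 := fun y x hW =>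
    mul_ne_zero (marginal_pos hT hV hQ' hW).ne' (right_ne_zero_of_mul (h y x hW))
  rw [realDQP_eq_sum_log h, realDQP_eq_sum_log h',
    ← sum_sum_mul_log_marginal_sub_log hQ' fun y x hW => left_ne_zero_of_mul (h y x hW)]
  simp only [← sum_add_distrib]
  exact sum_congr rfl fun y _ => sum_congr rfl fun x _ => by ring

theorem realDTQ_eq_realDTQ_marginal_add (hT : IsPMF T) (hV : IsCondPMF V)
    (hQ' : ∀ x, Q' x = ∑ y, T y * V y x) (h : ∀ y x, T y * V y x ≠ 0 → Q x ≠ 0) :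
    realDTQ T V Q = realDTQ T V Q' + ∑ x, Q' x * log (Q' x / Q x) := by
  rw [realDTQ_eq_sum_log h,
    realDTQ_eq_sum_log (Q := Q') fun y x hW => (marginal_pos hT hV hQ' hW).ne',
    ← sum_sum_mul_log_marginal_sub_log hQ' h]
  simp only [← sum_add_distrib]
  exact sum_congr rfl fun y _ => sum_congr rfl fun x _ => by ring

end Divergences

section Gallager

variable {𝓧 𝓨 : Type*} [Fintype 𝓧]
  {T : 𝓨 → ℝ} {V : 𝓨 → 𝓧 → ℝ} {q : 𝓧 → ℝ} {P : 𝓧 → 𝓨 → ℝ} {ρ : ℝ}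

lemma le_maxP {y : 𝓨} {x : 𝓧} (hx : 0 < q x) : P x y ≤ maxP q P y :=
  le_ciSup (f := fun x : {x // 0 < q x} => P x.1 y) (Set.finite_range _).bddAbove ⟨x, hx⟩

variable [Fintype 𝓨]

lemma maxP_nonneg (hP : IsChannel P) (y : 𝓨) : 0 ≤ maxP q P y :=
  Real.iSup_nonneg fun x => (hP x.1).1 y

lemma sum_mul_mul_const_of_isCondPMF (hV : IsCondPMF V) (y : 𝓨) (c : ℝ) :
    ∑ x, T y * V y x * c = T y * c := by
  rw [← sum_mul, ← mul_sum, (hV y).2, mul_one]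

noncomputable def gallagerSum (q : 𝓧 → ℝ) (P : 𝓧 → 𝓨 → ℝ) (ρ : ℝ) (y : 𝓨) : ℝ :=
  ∑ x, q x * P x y ^ (1 / (1 + ρ))

lemma gallagerSum_nonneg (hq : ∀ x, 0 ≤ q x) (hP : IsChannel P) (ρ : ℝ) (y : 𝓨) :
    0 ≤ gallagerSum q P ρ y :=
  sum_nonneg fun x _ => mul_nonneg (hq x) (rpow_nonneg ((hP x).1 y) _)

lemma gallagerSum_pos (hq : ∀ x, 0 ≤ q x) (hP : IsChannel P) {y : 𝓨} {x : 𝓧}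
    (h : q x * P x y ≠ 0) : 0 < gallagerSum q P ρ y := by
  obtain ⟨hqx, hPxy⟩ := pos_and_pos_of_mul_ne_zero (hq x) ((hP x).1 y) h
  exact (mul_pos hqx (rpow_pos_of_pos hPxy _)).trans_le <|
    single_le_sum (f := fun x => q x * P x y ^ (1 / (1 + ρ)))
      (fun x _ => mul_nonneg (hq x) (rpow_nonneg ((hP x).1 y) _)) (mem_univ x)

theorem E0_le_realDQP_add_mul_realDTQ (hρ : -1 < ρ) (hq : ∀ x, 0 ≤ q x) (hP : IsChannel P)
    (hT : IsPMF T) (hV : IsCondPMF V) (h : ∀ y x, T y * V y x ≠ 0 → q x * P x y ≠ 0) :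
    E0 ρ q P ≤ realDQP T V q P + ρ * realDTQ T V q := by
  set A := gallagerSum q P ρ
  have h1ρ : 0 < 1 + ρ := by linarith
  have hA : ∀ y, T y ≠ 0 → 0 < A y := fun y hTy => by
    obtain ⟨x, hx⟩ := (hV y).exists_pos
    exact gallagerSum_pos hq hP (h y x (mul_ne_zero hTy hx.ne'))
  have hy : ∀ y, T y * log (T y / A y ^ (1 + ρ)) ≤ ∑ x, T y * V y x *
      (log (T y) + (1 + ρ) * (log (V y x) - log (q x)) - log (P x y)) := by
    intro y
    by_cases hTy : T y = 0
    · simp [hTy]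
    have hsupp : ∀ x, V y x ≠ 0 → 0 < q x ∧ 0 < P x y := fun x hVx =>
      pos_and_pos_of_mul_ne_zero (hq x) ((hP x).1 y) (h y x (mul_ne_zero hTy hVx))
    have hgibbs := neg_log_sum_le_sum_mul_log_div (hV y)
      (μ := fun x => q x * P x y ^ (1 / (1 + ρ)))
      (fun x => mul_nonneg (hq x) (rpow_nonneg ((hP x).1 y) _))
      fun x hVx => mul_pos (hsupp x hVx).1 (rpow_pos_of_pos (hsupp x hVx).2 _)
    have hterm : ∀ x, T y * V y x *
        (log (T y) + (1 + ρ) * (log (V y x) - log (q x)) - log (P x y))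
        = T y * V y x * log (T y) +
          (1 + ρ) * T y * (V y x * log (V y x / (q x * P x y ^ (1 / (1 + ρ))))) := by
      intro x
      by_cases hVx : V y x = 0
      · simp [hVx]
      obtain ⟨hqx, hPxy⟩ := hsupp x hVx
      rw [log_div hVx (by positivity), log_mul hqx.ne' (by positivity), log_rpow hPxy]
      field_simp
      ring
    calc T y * log (T y / A y ^ (1 + ρ)) = T y * log (T y) + (1 + ρ) * T y * -log (A y) := by
          rw [log_div hTy (rpow_pos_of_pos (hA y hTy) _).ne', log_rpow (hA y hTy)]
          ring
      _ ≤ T y * log (T y) + (1 + ρ) * T y *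
            ∑ x, V y x * log (V y x / (q x * P x y ^ (1 / (1 + ρ)))) := by
          gcongr
          · exact mul_nonneg h1ρ.le (hT.1 y)
          · exact hgibbs
      _ = _ := by
          rw [sum_congr rfl fun x _ => hterm x, sum_add_distrib,
            sum_mul_mul_const_of_isCondPMF hV, mul_sum]
  calc E0 ρ q P = -log (∑ y, A y ^ (1 + ρ)) := rfl
    _ ≤ ∑ y, T y * log (T y / A y ^ (1 + ρ)) :=
      neg_log_sum_le_sum_mul_log_div hT (fun y => rpow_nonneg (gallagerSum_nonneg hq hP ρ y) _)
        fun y hTy => rpow_pos_of_pos (hA y hTy) _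
    _ ≤ _ := sum_le_sum fun y _ => hy y
    _ = _ := (realDQP_add_mul_realDTQ ρ h).symm

theorem E0m1_le_realDQP_sub_realDTQ (hq : ∀ x, 0 ≤ q x) (hP : IsChannel P)
    (hT : IsPMF T) (hV : IsCondPMF V) (h : ∀ y x, T y * V y x ≠ 0 → q x * P x y ≠ 0) :
    E0m1 q P ≤ realDQP T V q P - realDTQ T V q := by
  have hmax : ∀ y x, T y * V y x ≠ 0 → 0 < P x y ∧ P x y ≤ maxP q P y := fun y x hW => by
    obtain ⟨hqx, hPxy⟩ := pos_and_pos_of_mul_ne_zero (hq x) ((hP x).1 y) (h y x hW)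
    exact ⟨hPxy, le_maxP hqx⟩
  have hm : ∀ y, T y ≠ 0 → 0 < maxP q P y := fun y hTy => by
    obtain ⟨x, hx⟩ := (hV y).exists_pos
    have hW := mul_ne_zero hTy hx.ne'
    exact (hmax y x hW).1.trans_le (hmax y x hW).2
  have hy : ∀ y, T y * log (T y / maxP q P y) ≤ ∑ x, T y * V y x *
      (log (T y) + (1 + -1) * (log (V y x) - log (q x)) - log (P x y)) := by
    intro y
    by_cases hTy : T y = 0
    · simp [hTy]
    calc T y * log (T y / maxP q P y) = ∑ x, T y * V y x * (log (T y) - log (maxP q P y)) := by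
          rw [sum_mul_mul_const_of_isCondPMF hV, log_div hTy (hm y hTy).ne']
      _ ≤ _ := by
          refine sum_le_sum fun x _ => ?_
          by_cases hW : T y * V y x = 0
          · simp [hW]
          rw [add_neg_cancel, zero_mul, add_zero]
          exact mul_le_mul_of_nonneg_left
            (by linarith [log_le_log (hmax y x hW).1 (hmax y x hW).2])
            (mul_nonneg (hT.1 y) ((hV y).1 x))
  calc E0m1 q P = -log (∑ y, maxP q P y) := rfl
    _ ≤ ∑ y, T y * log (T y / maxP q P y) :=
      neg_log_sum_le_sum_mul_log_div hT (fun y => maxP_nonneg hP y) hm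
    _ ≤ _ := sum_le_sum fun y _ => hy y
    _ = realDQP T V q P - realDTQ T V q := (realDQP_add_mul_realDTQ (-1) h).symm.trans (by ring)

end Gallager

section WeakDuality

variable {𝓧 𝓨 : Type*} [Fintype 𝓧] [Fintype 𝓨]
  {T : 𝓨 → ℝ} {V : 𝓨 → 𝓧 → ℝ} {q : 𝓧 → ℝ} {P : 𝓧 → 𝓨 → ℝ} {ρ : ℝ}

theorem E0full_le_realDQP_add_mul_realDTQ (hρ : -1 ≤ ρ) (hq : ∀ x, 0 ≤ q x) (hP : IsChannel P)
    (hT : IsPMF T) (hV : IsCondPMF V) (h : ∀ y x, T y * V y x ≠ 0 → q x * P x y ≠ 0) :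
    E0full ρ q P ≤ realDQP T V q P + ρ * realDTQ T V q := by
  rcases hρ.eq_or_lt with rfl | hρ
  · rw [E0full, if_pos rfl, neg_one_mul, ← sub_eq_add_neg]
    exact E0m1_le_realDQP_sub_realDTQ hq hP hT hV h
  · rw [E0full, if_neg hρ.ne']
    exact E0_le_realDQP_add_mul_realDTQ hρ hq hP hT hV h

lemma neg_mul_le_max_zero (hρ : ρ ∈ Icc (-1 : ℝ) 0) (a : ℝ) : -ρ * a ≤ max a 0 := by
  rcases le_total a 0 with ha | ha
  · rw [max_eq_right ha]; nlinarith [hρ.2]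
  · rw [max_eq_left ha]; nlinarith [hρ.1]

theorem E0full_sub_mul_le_EcML (hq : ∀ x, 0 ≤ q x) (hP : IsChannel P) (R : ℝ)
    (hρ : ρ ∈ Icc (-1 : ℝ) 0) : ((E0full ρ q P - ρ * R : ℝ) : EReal) ≤ EcML R q P := by
  refine le_sInf ?_
  rintro _ ⟨T, V, hT, hV, rfl⟩
  by_cases h : ∀ y x, T y * V y x ≠ 0 → q x * P x y ≠ 0
  · rw [DQP_add_max_eq_coe R h, EReal.coe_le_coe_iff]
    linarith [E0full_le_realDQP_add_mul_realDTQ hρ.1 hq hP hT hV h,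
      neg_mul_le_max_zero hρ (R - realDTQ T V q)]
  · push Not at h
    obtain ⟨y, x, hW, hqP⟩ := h
    rw [DQP_add_max_eq_top R hW hqP]
    exact le_top

end WeakDuality

section Tilted

variable {𝓧 𝓨 : Type*} [Fintype 𝓧] {q : 𝓧 → ℝ} {P : 𝓧 → 𝓨 → ℝ} {ρ : ℝ}

/-- With `tiltedOutput` below, the equality case of both Gibbs inequalities in
`E0_le_realDQP_add_mul_realDTQ`. Where `gallagerSum q P ρ y = 0`, `tiltedOutput q P ρ y = 0`,
and the value `q x` only makes the kernel a conditional pmf. -/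
noncomputable def tiltedChannel (q : 𝓧 → ℝ) (P : 𝓧 → 𝓨 → ℝ) (ρ : ℝ) (y : 𝓨) (x : 𝓧) : ℝ :=
  if gallagerSum q P ρ y = 0 then q x else q x * P x y ^ (1 / (1 + ρ)) / gallagerSum q P ρ y

lemma log_tiltedChannel_sub_log {y : 𝓨} {x : 𝓧} (hA : 0 < gallagerSum q P ρ y) (hqx : 0 < q x)
    (hPxy : 0 < P x y) :
    log (tiltedChannel q P ρ y x) - log (q x)
      = 1 / (1 + ρ) * log (P x y) - log (gallagerSum q P ρ y) := by
  rw [tiltedChannel, if_neg hA.ne', log_div (by positivity) hA.ne',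
    log_mul hqx.ne' (by positivity), log_rpow hPxy]
  ring

lemma continuousOn_gallagerSum (y : 𝓨) :
    ContinuousOn (fun ρ => gallagerSum q P ρ y) (Ioi (-1)) := by
  have hpos : ∀ ρ ∈ Ioi (-1 : ℝ), 0 < 1 + ρ := fun ρ hρ => by linarith [mem_Ioi.1 hρ]
  refine continuousOn_finsetSum _ fun x _ => continuousOn_const.mul <|
    continuousOn_const.rpow (continuousOn_const.div (continuousOn_const.add continuousOn_id)
      fun ρ hρ => (hpos ρ hρ).ne') fun ρ hρ => Or.inr (one_div_pos.2 (hpos ρ hρ))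

variable [Fintype 𝓨]

noncomputable def tiltedOutput (q : 𝓧 → ℝ) (P : 𝓧 → 𝓨 → ℝ) (ρ : ℝ) (y : 𝓨) : ℝ :=
  gallagerSum q P ρ y ^ (1 + ρ) / ∑ y', gallagerSum q P ρ y' ^ (1 + ρ)

noncomputable def tiltedRate (q : 𝓧 → ℝ) (P : 𝓧 → 𝓨 → ℝ) (ρ : ℝ) : ℝ :=
  realDTQ (tiltedOutput q P ρ) (tiltedChannel q P ρ) q

lemma sum_gallagerSum_rpow_pos (hq : IsPMF q) (hP : IsChannel P) :
    0 < ∑ y, gallagerSum q P ρ y ^ (1 + ρ) := by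
  obtain ⟨x, hx⟩ := hq.exists_pos
  obtain ⟨y, hy⟩ := (hP x).exists_pos
  exact sum_pos' (fun y _ => rpow_nonneg (gallagerSum_nonneg hq.1 hP ρ y) _)
    ⟨y, mem_univ y, rpow_pos_of_pos (gallagerSum_pos hq.1 hP (mul_pos hx hy).ne') _⟩

lemma tiltedOutput_isPMF (hq : IsPMF q) (hP : IsChannel P) : IsPMF (tiltedOutput q P ρ) :=
  ⟨fun y => div_nonneg (rpow_nonneg (gallagerSum_nonneg hq.1 hP ρ y) _)
      (sum_gallagerSum_rpow_pos hq hP).le,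
    by simp only [tiltedOutput]; rw [← sum_div, div_self (sum_gallagerSum_rpow_pos hq hP).ne']⟩

lemma tiltedChannel_isCondPMF (hq : IsPMF q) (hP : IsChannel P) :
    IsCondPMF (tiltedChannel q P ρ) := by
  intro y
  by_cases hA : gallagerSum q P ρ y = 0
  · rwa [show tiltedChannel q P ρ y = q from funext fun x => if_pos hA]
  · have hApos := (gallagerSum_nonneg hq.1 hP ρ y).lt_of_ne (Ne.symm hA)
    rw [show tiltedChannel q P ρ y = fun x => q x * P x y ^ (1 / (1 + ρ)) / gallagerSum q P ρ y
      from funext fun x => if_neg hA]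
    exact ⟨fun x => div_nonneg (mul_nonneg (hq.1 x) (rpow_nonneg ((hP x).1 y) _)) hApos.le,
      by rw [← sum_div]; exact div_self hA⟩

lemma gallagerSum_ne_zero_of_tiltedOutput_ne_zero (hρ : -1 < ρ) {y : 𝓨}
    (h : tiltedOutput q P ρ y ≠ 0) : gallagerSum q P ρ y ≠ 0 := by
  intro hA
  simp [tiltedOutput, hA, zero_rpow (by linarith : 1 + ρ ≠ 0)] at h

lemma ne_zero_of_tilted_ne_zero (hρ : -1 < ρ) (y : 𝓨) (x : 𝓧)
    (hW : tiltedOutput q P ρ y * tiltedChannel q P ρ y x ≠ 0) : q x * P x y ≠ 0 := by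
  have hA := gallagerSum_ne_zero_of_tiltedOutput_ne_zero hρ (left_ne_zero_of_mul hW)
  have hV := right_ne_zero_of_mul hW
  rw [tiltedChannel, if_neg hA] at hV
  have hnum := (div_ne_zero_iff.1 hV).1
  refine mul_ne_zero (left_ne_zero_of_mul hnum) fun hP0 => right_ne_zero_of_mul hnum ?_
  rw [hP0, zero_rpow (one_div_ne_zero (by linarith))]

lemma log_tiltedOutput (hq : IsPMF q) (hP : IsChannel P) {y : 𝓨} (hA : 0 < gallagerSum q P ρ y) :
    log (tiltedOutput q P ρ y)
      = (1 + ρ) * log (gallagerSum q P ρ y) - log (∑ y', gallagerSum q P ρ y' ^ (1 + ρ)) := by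
  rw [tiltedOutput, log_div (rpow_pos_of_pos hA _).ne' (sum_gallagerSum_rpow_pos hq hP).ne',
    log_rpow hA]

theorem realDQP_tilted_add_mul_tiltedRate (hρ : -1 < ρ) (hq : IsPMF q) (hP : IsChannel P) :
    realDQP (tiltedOutput q P ρ) (tiltedChannel q P ρ) q P + ρ * tiltedRate q P ρ = E0 ρ q P := by
  have hy : ∀ y, ∑ x, tiltedOutput q P ρ y * tiltedChannel q P ρ y x *
      (log (tiltedOutput q P ρ y) + (1 + ρ) * (log (tiltedChannel q P ρ y x) - log (q x))
        - log (P x y)) = tiltedOutput q P ρ y * -log (∑ y', gallagerSum q P ρ y' ^ (1 + ρ)) := by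
    intro y
    by_cases hTy : tiltedOutput q P ρ y = 0
    · simp [hTy]
    have hA := (gallagerSum_nonneg hq.1 hP ρ y).lt_of_ne
      (gallagerSum_ne_zero_of_tiltedOutput_ne_zero hρ hTy).symm
    rw [← sum_mul_mul_const_of_isCondPMF (tiltedChannel_isCondPMF hq hP)]
    refine sum_congr rfl fun x _ => ?_
    by_cases hW : tiltedOutput q P ρ y * tiltedChannel q P ρ y x = 0
    · rw [hW, zero_mul, zero_mul]
    obtain ⟨hqx, hPxy⟩ :=
      pos_and_pos_of_mul_ne_zero (hq.1 x) ((hP x).1 y) (ne_zero_of_tilted_ne_zero hρ y x hW)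
    have h1ρ : 1 + ρ ≠ 0 := by linarith
    rw [log_tiltedOutput hq hP hA, log_tiltedChannel_sub_log hA hqx hPxy]
    congr 1
    field_simp
    ring
  rw [tiltedRate, realDQP_add_mul_realDTQ ρ (ne_zero_of_tilted_ne_zero hρ),
    sum_congr rfl fun y _ => hy y,
    ← sum_mul, (tiltedOutput_isPMF hq hP).2, one_mul]
  rfl

theorem tiltedRate_nonneg (hρ : -1 < ρ) (hq : IsPMF q) (hP : IsChannel P) :
    0 ≤ tiltedRate q P ρ :=
  realDTQ_nonneg (tiltedChannel_isCondPMF hq hP) hq (tiltedOutput_isPMF hq hP).1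
    fun y x hW => left_ne_zero_of_mul (ne_zero_of_tilted_ne_zero hρ y x hW)

lemma continuousOn_sum_gallagerSum_rpow :
    ContinuousOn (fun ρ => ∑ y, gallagerSum q P ρ y ^ (1 + ρ)) (Ioi (-1)) :=
  continuousOn_finsetSum _ fun y _ => (continuousOn_gallagerSum y).rpow
    (continuousOn_const.add continuousOn_id) fun ρ hρ => Or.inr (by linarith [mem_Ioi.1 hρ])

theorem continuousOn_tiltedRate (hq : IsPMF q) (hP : IsChannel P) :
    ContinuousOn (tiltedRate q P) (Ioi (-1)) := by
  have hrate : ∀ ρ ∈ Ioi (-1 : ℝ), tiltedRate q P ρ = ∑ y, ∑ x,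
      if q x * P x y = 0 then 0 else
        gallagerSum q P ρ y ^ (1 + ρ) / (∑ y', gallagerSum q P ρ y' ^ (1 + ρ)) *
          (q x * P x y ^ (1 / (1 + ρ)) / gallagerSum q P ρ y) *
          (1 / (1 + ρ) * log (P x y) - log (gallagerSum q P ρ y)) := by
    intro ρ hρ
    rw [tiltedRate, realDTQ_eq_sum_log fun y x hW =>
      left_ne_zero_of_mul (ne_zero_of_tilted_ne_zero hρ y x hW)]
    refine sum_congr rfl fun y _ => sum_congr rfl fun x _ => ?_
    split_ifs with hqP
    · by_contra hW
      exact ne_zero_of_tilted_ne_zero hρ y x (left_ne_zero_of_mul hW) hqP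
    obtain ⟨hqx, hPxy⟩ := pos_and_pos_of_mul_ne_zero (hq.1 x) ((hP x).1 y) hqP
    have hA : 0 < gallagerSum q P ρ y := gallagerSum_pos hq.1 hP hqP
    rw [log_tiltedChannel_sub_log hA hqx hPxy, tiltedOutput, tiltedChannel, if_neg hA.ne']
  refine ContinuousOn.congr ?_ hrate
  refine continuousOn_finsetSum _ fun y _ => continuousOn_finsetSum _ fun x _ => ?_
  split_ifs with hqP
  · exact continuousOn_const
  obtain ⟨hqx, hPxy⟩ := pos_and_pos_of_mul_ne_zero (hq.1 x) ((hP x).1 y) hqP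
  have hpos : ∀ ρ ∈ Ioi (-1 : ℝ), 0 < 1 + ρ := fun ρ hρ => by linarith [mem_Ioi.1 hρ]
  have hA : ∀ ρ ∈ Ioi (-1 : ℝ), gallagerSum q P ρ y ≠ 0 := fun _ _ =>
    (gallagerSum_pos hq.1 hP hqP).ne'
  have hS : ∀ ρ ∈ Ioi (-1 : ℝ), ∑ y', gallagerSum q P ρ y' ^ (1 + ρ) ≠ 0 := fun _ _ =>
    (sum_gallagerSum_rpow_pos hq hP).ne'
  have hs : ContinuousOn (fun ρ : ℝ => 1 / (1 + ρ)) (Ioi (-1)) :=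
    continuousOn_const.div (continuousOn_const.add continuousOn_id) fun ρ hρ => (hpos ρ hρ).ne'
  have hA' := continuousOn_gallagerSum (q := q) (P := P) y
  have hPs : ContinuousOn (fun ρ : ℝ => P x y ^ (1 / (1 + ρ))) (Ioi (-1)) :=
    continuousOn_const.rpow hs fun _ _ => Or.inl hPxy.ne'
  exact ((((hA'.rpow (continuousOn_const.add continuousOn_id) fun ρ hρ => Or.inr (hpos ρ hρ)).div
    continuousOn_sum_gallagerSum_rpow hS).mul ((continuousOn_const.mul hPs).div hA' hA)).mul
    ((hs.mul continuousOn_const).sub (hA'.log hA)))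

end Tilted

lemma le_or_exists_eq_or_forall_lt {f : ℝ → ℝ} {a b c : ℝ} (hf : ContinuousOn f (Ioc a b)) :
    c ≤ f b ∨ (∃ x ∈ Ioc a b, f x = c) ∨ ∀ x ∈ Ioc a b, f x < c := by
  by_contra! h
  obtain ⟨hb, hne, x, hx, hfx⟩ := h
  obtain ⟨z, hz, hfz⟩ := intermediate_value_Icc' hx.2
    (hf.mono fun z hz => ⟨hx.1.trans_le hz.1, hz.2⟩) ⟨hb.le, hfx⟩
  exact hne z ⟨hx.1.trans_le hz.1, hz.2⟩ hfz

section StrongDuality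

variable {𝓧 𝓨 : Type*} [Fintype 𝓧] [Fintype 𝓨] {q : 𝓧 → ℝ} {P : 𝓧 → 𝓨 → ℝ} {ρ : ℝ}

theorem EcML_le_tilted (hρ : -1 < ρ) (hq : IsPMF q) (hP : IsChannel P) (R : ℝ) :
    EcML R q P ≤
      ((E0 ρ q P - ρ * tiltedRate q P ρ + max (R - tiltedRate q P ρ) 0 : ℝ) : EReal) := by
  calc EcML R q P ≤ DQP (tiltedOutput q P ρ) (tiltedChannel q P ρ) q P
        + max ((R : EReal) - DTQ (tiltedOutput q P ρ) (tiltedChannel q P ρ) q) 0 :=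
      sInf_le ⟨_, _, tiltedOutput_isPMF hq hP, tiltedChannel_isCondPMF hq hP, rfl⟩
    _ = _ := by
      rw [DQP_add_max_eq_coe R (ne_zero_of_tilted_ne_zero hρ),
        ← realDQP_tilted_add_mul_tiltedRate hρ hq hP,
        tiltedRate]
      ring_nf

lemma E0_le_E0m1_sub (hρ : -1 < ρ) (hq : IsPMF q) (hP : IsChannel P) {c : ℝ} (hc : 0 < c)
    (hcq : ∀ x, 0 < q x → c ≤ q x) : E0 ρ q P ≤ E0m1 q P - (1 + ρ) * log c := by
  have h1ρ : 0 < 1 + ρ := by linarith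
  obtain ⟨x₀, hx₀⟩ := hq.exists_pos
  have : Nonempty {x // 0 < q x} := ⟨⟨x₀, hx₀⟩⟩
  have hy : ∀ y, c ^ (1 + ρ) * maxP q P y ≤ gallagerSum q P ρ y ^ (1 + ρ) := by
    intro y
    obtain ⟨⟨x, hx⟩, hmax⟩ := exists_eq_ciSup_of_finite (f := fun x : {x // 0 < q x} => P x.1 y)
    have hPx := (hP x).1 y
    calc c ^ (1 + ρ) * maxP q P y = (c * P x y ^ (1 / (1 + ρ))) ^ (1 + ρ) := by
          rw [maxP, ← hmax, mul_rpow hc.le (rpow_nonneg hPx _), ← rpow_mul hPx,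
            one_div_mul_cancel h1ρ.ne', rpow_one]
      _ ≤ (q x * P x y ^ (1 / (1 + ρ))) ^ (1 + ρ) := by gcongr; exact hcq x hx
      _ ≤ gallagerSum q P ρ y ^ (1 + ρ) := by
          gcongr
          exact single_le_sum (f := fun x => q x * P x y ^ (1 / (1 + ρ)))
            (fun x _ => mul_nonneg (hq.1 x) (rpow_nonneg ((hP x).1 y) _)) (mem_univ x)
  have hm : 0 < ∑ y, maxP q P y := by
    obtain ⟨y, hy⟩ := (hP x₀).exists_pos
    exact sum_pos' (fun y _ => maxP_nonneg hP y) ⟨y, mem_univ y, hy.trans_le (le_maxP hx₀)⟩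
  calc E0 ρ q P = -log (∑ y, gallagerSum q P ρ y ^ (1 + ρ)) := rfl
    _ ≤ -log (c ^ (1 + ρ) * ∑ y, maxP q P y) := by
        gcongr
        rw [mul_sum]
        exact sum_le_sum fun y _ => hy y
    _ = E0m1 q P - (1 + ρ) * log c := by
        rw [log_mul (by positivity) hm.ne', log_rpow hc, E0m1]
        ring

theorem EcML_le_E0m1_add (hq : IsPMF q) (hP : IsChannel P) (R : ℝ)
    (h : ∀ ρ ∈ Ioc (-1 : ℝ) 0, tiltedRate q P ρ < R) :
    EcML R q P ≤ ((E0m1 q P + R : ℝ) : EReal) := by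
  obtain ⟨c, hc, hcq⟩ : ∃ c, 0 < c ∧ ∀ x, 0 < q x → c ≤ q x := by
    obtain ⟨x₀, hx₀⟩ := hq.exists_pos
    have : Nonempty {x // 0 < q x} := ⟨⟨x₀, hx₀⟩⟩
    obtain ⟨⟨x, hx⟩, hmin⟩ := Finite.exists_min fun x : {x // 0 < q x} => q x
    exact ⟨q x, hx, fun x' hx' => hmin ⟨x', hx'⟩⟩
  have hbound : ∀ ρ ∈ Ioc (-1 : ℝ) 0,
      EcML R q P ≤ ((E0m1 q P + R - (1 + ρ) * log c : ℝ) : EReal) := fun ρ hρ => by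
    refine (EcML_le_tilted hρ.1 hq hP R).trans (EReal.coe_le_coe_iff.2 ?_)
    have hr := h ρ hρ
    have hr₀ := mul_nonneg (by linarith [hρ.1] : 0 ≤ 1 + ρ) (tiltedRate_nonneg hρ.1 hq hP)
    rw [max_eq_left (by linarith)]
    linarith [E0_le_E0m1_sub hρ.1 hq hP hc hcq]
  have htend : Tendsto (fun ρ : ℝ => ((E0m1 q P + R - (1 + ρ) * log c : ℝ) : EReal))
      (𝓝[>] (-1)) (𝓝 ((E0m1 q P + R : ℝ) : EReal)) := by
    have hcont : Continuous fun ρ : ℝ => ((E0m1 q P + R - (1 + ρ) * log c : ℝ) : EReal) :=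
      continuous_coe_real_ereal.comp (by fun_prop)
    simpa using (hcont.tendsto (-1)).mono_left nhdsWithin_le_nhds
  refine ge_of_tendsto htend ?_
  filter_upwards [Ioc_mem_nhdsGT (by norm_num : (-1 : ℝ) < 0)] with ρ hρ using hbound ρ hρ

theorem exists_EcML_eq (hq : IsPMF q) (hP : IsChannel P) (R : ℝ) :
    ∃ ρ ∈ Icc (-1 : ℝ) 0, EcML R q P = ((E0full ρ q P - ρ * R : ℝ) : EReal) := by
  suffices h : ∃ ρ ∈ Icc (-1 : ℝ) 0, EcML R q P ≤ ((E0full ρ q P - ρ * R : ℝ) : EReal) by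
    obtain ⟨ρ, hρ, hle⟩ := h
    exact ⟨ρ, hρ, le_antisymm hle (E0full_sub_mul_le_EcML hq.1 hP R hρ)⟩
  rcases le_or_exists_eq_or_forall_lt (c := R)
      ((continuousOn_tiltedRate hq hP).mono (Ioc_subset_Ioi_self : Ioc (-1 : ℝ) 0 ⊆ _)) with
    h | ⟨ρ, hρ, hr⟩ | h
  · refine ⟨0, ⟨by norm_num, le_rfl⟩, ?_⟩
    convert EcML_le_tilted (ρ := 0) (by norm_num) hq hP R using 2
    rw [E0full, if_neg (by norm_num), max_eq_right (by linarith)]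
    ring
  · refine ⟨ρ, Ioc_subset_Icc_self hρ, ?_⟩
    convert EcML_le_tilted hρ.1 hq hP R using 2
    rw [E0full, if_neg hρ.1.ne', hr, sub_self, max_self, add_zero]
  · refine ⟨-1, ⟨le_rfl, by norm_num⟩, ?_⟩
    convert EcML_le_E0m1_add hq hP R h using 2
    rw [E0full, if_pos rfl]
    ring

end StrongDuality

section Marginal

variable {𝓧 𝓨 : Type*} [Fintype 𝓧] [Fintype 𝓨]
  {T : 𝓨 → ℝ} {V : 𝓨 → 𝓧 → ℝ} {Q Q' : 𝓧 → ℝ} {P : 𝓧 → 𝓨 → ℝ} {ρ : ℝ}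

theorem E0full_sub_add_mul_sum_klTerm_le (hP : IsChannel P) (R : ℝ) (hT : IsPMF T)
    (hV : IsCondPMF V) (hQ' : ∀ x, Q' x = ∑ y, T y * V y x) (hρ : ρ ∈ Icc (-1 : ℝ) 0) :
    ((E0full ρ Q' P - ρ * R : ℝ) : EReal) + ((1 + ρ : ℝ) : EReal) * ∑ x, klTerm (Q' x) (Q x)
      ≤ DQP T V Q P + max ((R : EReal) - DTQ T V Q) 0 := by
  by_cases h : ∀ y x, T y * V y x ≠ 0 → Q x * P x y ≠ 0
  · have hQ : ∀ y x, T y * V y x ≠ 0 → Q x ≠ 0 := fun y x hW => left_ne_zero_of_mul (h y x hW)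
    have h' : ∀ y x, T y * V y x ≠ 0 → Q' x * P x y ≠ 0 := fun y x hW =>
      mul_ne_zero (marginal_pos hT hV hQ' hW).ne' (right_ne_zero_of_mul (h y x hW))
    rw [DQP_add_max_eq_coe R h, sum_klTerm_eq_coe fun x => ne_zero_of_marginal_ne_zero hQ' hQ,
      ← EReal.coe_mul, ← EReal.coe_add, EReal.coe_le_coe_iff,
      realDQP_eq_realDQP_marginal_add hT hV hQ' h, realDTQ_eq_realDTQ_marginal_add hT hV hQ' hQ]
    linarith [E0full_le_realDQP_add_mul_realDTQ hρ.1 (isPMF_marginal hT hV hQ').1 hP hT hV h',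
      neg_mul_le_max_zero hρ (R - (realDTQ T V Q' + ∑ x, Q' x * log (Q' x / Q x)))]
  · push Not at h
    obtain ⟨y, x, hW, hQP⟩ := h
    rw [DQP_add_max_eq_top R hW hQP]
    exact le_top

end Marginal

theorem stmt_11_general {𝓧 𝓨 : Type*} [Fintype 𝓧] [Fintype 𝓨]
    (P : 𝓧 → 𝓨 → ℝ) (hP : IsChannel P) (Q : 𝓧 → ℝ) (hQ : IsPMF Q) (R : ℝ)
    (T : 𝓨 → ℝ) (V : 𝓨 → 𝓧 → ℝ) (hT : IsPMF T) (hV : IsCondPMF V)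
    (hmin : DQP T V Q P + max ((R : EReal) - DTQ T V Q) 0 = EcML R Q P)
    (Q' : 𝓧 → ℝ) (hQ' : ∀ x, Q' x = ∑ y, T y * V y x) :
    EcML R Q' P ≤ EcML R Q P
    ∧ ∃ ρ ∈ Set.Icc (-1 : ℝ) 0,
        EcML R Q' P = ((E0full ρ Q' P - ρ * R : ℝ) : EReal)
        ∧ EcML R Q' P + ((1 + ρ : ℝ) : EReal) * (∑ x, klTerm (Q' x) (Q x))
            ≤ EcML R Q P := by
  have hQ'pmf := isPMF_marginal hT hV hQ'
  obtain ⟨ρ, hρ, hEq⟩ := exists_EcML_eq hQ'pmf hP R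
  have hgap : EcML R Q' P + ((1 + ρ : ℝ) : EReal) * ∑ x, klTerm (Q' x) (Q x) ≤ EcML R Q P := by
    rw [hEq, ← hmin]
    exact E0full_sub_add_mul_sum_klTerm_le hP R hT hV hQ' hρ
  have hkl : 0 ≤ ((1 + ρ : ℝ) : EReal) * ∑ x, klTerm (Q' x) (Q x) :=
    mul_nonneg (EReal.coe_nonneg.2 (by linarith [hρ.1])) (sum_klTerm_nonneg hQ'pmf hQ)
  exact ⟨le_add_of_nonneg_right hkl |>.trans hgap, ρ, hρ, hEq, hgap⟩

theorem stmt_11 {𝓧 𝓨 : Type*} [Fintype 𝓧] [Fintype 𝓨] [Nonempty 𝓧] [Nonempty 𝓨]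
    (P : 𝓧 → 𝓨 → ℝ) (hP : IsChannel P) (Q : 𝓧 → ℝ) (hQ : IsPMF Q) (R : ℝ)
    (T : 𝓨 → ℝ) (V : 𝓨 → 𝓧 → ℝ) (hT : IsPMF T) (hV : IsCondPMF V)
    (hmin : DQP T V Q P + max ((R : EReal) - DTQ T V Q) 0 = EcML R Q P)
    (Q' : 𝓧 → ℝ) (hQ' : ∀ x, Q' x = ∑ y, T y * V y x) :
    EcML R Q' P ≤ EcML R Q P
    ∧ ∃ ρ ∈ Set.Icc (-1 : ℝ) 0,
        EcML R Q' P = ((E0full ρ Q' P - ρ * R : ℝ) : EReal)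
        ∧ EcML R Q' P + ((1 + ρ : ℝ) : EReal) * (∑ x, klTerm (Q' x) (Q x))
            ≤ EcML R Q P :=
  stmt_11_general P hP Q hQ R T V hT hV hmin Q' hQ'
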